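/- The exact solution map of the matrix differential equation X'(t) = -X(t) B R^{-1} B^T X(t), X(0) = X_0, is given by X(t) = (I + t X_0 B R^{-1} B^T)^{-1} X_0, whenever I + t X_0 B R^{-1} B^T is invertible; i.e., this expression satisfies the differential equation and the initial condition. -/

import Mathlib

/-! With `K = B R⁻¹ Bᵀ` and `A t = 1 + t • X₀ K`, the derivative of inversion gives
`(A⁻¹)' = -A⁻¹ (X₀ K) A⁻¹`, so `(A⁻¹ X₀)' = -(A⁻¹ X₀) K (A⁻¹ X₀)`. -/

open Matrix
attribute [local instance] Matrix.frobeniusNormedAddCommGroup Matrix.frobeniusNormedSpace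

theorem HasDerivAt.ringInverse {𝕜 R : Type*} [NontriviallyNormedField 𝕜] [NormedRing R]
    [HasSummableGeomSeries R] [NormedAlgebra 𝕜 R] {f : 𝕜 → R} {f' : R} {t : 𝕜}
    (hf : HasDerivAt f f' t) (ht : IsUnit (f t)) :
    HasDerivAt (fun s => Ring.inverse (f s))
      (-(Ring.inverse (f t) * f' * Ring.inverse (f t))) t := by
  obtain ⟨u, hu⟩ := ht
  have hinv : HasFDerivAt Ring.inverse
      (-ContinuousLinearMap.mulLeftRight 𝕜 R ↑u⁻¹ ↑u⁻¹) (f t) :=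
    hu ▸ hasFDerivAt_ringInverse u
  rw [← hu, Ring.inverse_unit]
  exact hinv.comp_hasDerivAt t hf

section FrobeniusAlgebra
attribute [local instance] Matrix.frobeniusNormedRing Matrix.frobeniusNormedAlgebra

theorem stmt0_general {n m : ℕ} (X₀ : Matrix (Fin n) (Fin n) ℝ)
    (B : Matrix (Fin n) (Fin m) ℝ) (R : Matrix (Fin m) (Fin m) ℝ)
    (X : ℝ → Matrix (Fin n) (Fin n) ℝ)
    (hXdef : ∀ t : ℝ, X t = (1 + t • (X₀ * B * R⁻¹ * Bᵀ))⁻¹ * X₀) :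
    X 0 = X₀ ∧
      ∀ t : ℝ, IsUnit (1 + t • (X₀ * B * R⁻¹ * Bᵀ)).det →
        HasDerivAt X (-(X t * (B * R⁻¹ * Bᵀ) * X t)) t := by
  set K := B * R⁻¹ * Bᵀ
  have hX : X = fun s => Ring.inverse (1 + s • (X₀ * K)) * X₀ := by
    funext s
    simp only [hXdef, K, Matrix.mul_assoc, Matrix.nonsing_inv_eq_ringInverse]
  refine ⟨by simp [hXdef], fun t ht => ?_⟩
  have hline : HasDerivAt (fun s : ℝ => 1 + s • (X₀ * K)) (X₀ * K) t :=
    (((hasDerivAt_id t).smul_const (X₀ * K)).const_add 1).congr_deriv (one_smul ℝ _)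
  have hunit : IsUnit (1 + t • (X₀ * K)) := by
    simpa [K, Matrix.mul_assoc, Matrix.isUnit_iff_isUnit_det] using ht
  rw [hX]
  exact ((hline.ringInverse hunit).mul_const X₀).congr_deriv (by
    simp only [Matrix.mul_assoc, Matrix.neg_mul])

/-- The solution of `X' = -X B R⁻¹ Bᵀ X`, `X(0) = X₀` is
`X(t) = (I + t X₀ B R⁻¹ Bᵀ)⁻¹ X₀` wherever `I + t X₀ B R⁻¹ Bᵀ` is invertible. -/
theorem stmt0 {n m : ℕ} (X₀ : Matrix (Fin n) (Fin n) ℝ)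
    (B : Matrix (Fin n) (Fin m) ℝ) (R : Matrix (Fin m) (Fin m) ℝ) (hR : IsUnit R.det)
    (X : ℝ → Matrix (Fin n) (Fin n) ℝ)
    (hXdef : ∀ t : ℝ, X t = (1 + t • (X₀ * B * R⁻¹ * Bᵀ))⁻¹ * X₀) :
    X 0 = X₀ ∧
      ∀ t : ℝ, IsUnit (1 + t • (X₀ * B * R⁻¹ * Bᵀ)).det →
        HasDerivAt X (-(X t * (B * R⁻¹ * Bᵀ) * X t)) t :=
  stmt0_general X₀ B R X hXdef
end FrobeniusAlgebra
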